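/- Applying T_{(v,w)} matrices for pairs (v_{i_1},w_{i_1}),...,(v_{i_k},w_{i_k}) to the vector (0,1,0,1)^T yields the vector ((V)_2, (V)_2 + 1, (W)_2, (W)_2 + 1)^T, where V = v_{i_1}⋯v_{i_k} and W = w_{i_1}⋯w_{i_k} are the concatenations. -/

import Mathlib

/-- The binary value of a word read most-significant-bit first. -/
def binVal (l : List Bool) : ℕ := l.foldl (fun n b => 2 * n + (if b then 1 else 0)) 0

/-- The matrix `T_v` (over ℚ) associated to a binary word `v`. -/
def Tword (v : List Bool) : Matrix (Fin 2) (Fin 2) ℚ :=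
  !![(2 : ℚ) ^ v.length - binVal v, (binVal v : ℚ);
     (2 : ℚ) ^ v.length - binVal v - 1, (binVal v : ℚ) + 1]

/-- The 4×4 block-diagonal matrix `T_{(v,w)} = diag(T_v, T_w)`. -/
def Tpair (pr : List Bool × List Bool) : Matrix (Fin 2 ⊕ Fin 2) (Fin 2 ⊕ Fin 2) ℚ :=
  Matrix.fromBlocks (Tword pr.1) 0 0 (Tword pr.2)

/-- The initial vector `(0, 1, 0, 1)ᵀ`. -/
def v₀ : (Fin 2 ⊕ Fin 2) → ℚ := Sum.elim ![0, 1] ![0, 1]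

lemma binVal_foldl (l : List Bool) (n : ℕ) :
    l.foldl (fun n b => 2 * n + (if b then 1 else 0)) n = 2 ^ l.length * n + binVal l := by
  induction l generalizing n with
  | nil => simp [binVal]
  | cons b l ih =>
    have h0 : binVal (b :: l) = 2 ^ l.length * (if b then 1 else 0) + binVal l := by
      simp only [binVal, List.foldl_cons]
      rw [ih]
      show 2 ^ l.length * (2 * 0 + (if b then 1 else 0)) + binVal l
        = 2 ^ l.length * (if b then 1 else 0) + binVal l
      ring
    simp only [List.foldl_cons, List.length_cons]
    rw [ih, h0]
    ring

lemma binVal_append (a b : List Bool) :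
    binVal (a ++ b) = 2 ^ b.length * binVal a + binVal b := by
  simp only [binVal, List.foldl_append]
  rw [binVal_foldl]
  rfl

lemma Tword_mulVec (v : List Bool) (x : ℚ) :
    (Tword v).mulVec ![x, x + 1]
      = ![2 ^ v.length * x + binVal v, 2 ^ v.length * x + binVal v + 1] := by
  funext i
  fin_cases i <;>
    simp [Tword, Matrix.mulVec, dotProduct, Fin.sum_univ_two] <;> ring

lemma Tpair_prod_mulVec_aux (ps : List (List Bool × List Bool)) (x y : ℚ) :
    ((ps.map Tpair).reverse.prod).mulVec (Sum.elim ![x, x + 1] ![y, y + 1])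
      = Sum.elim
          ![2 ^ ((ps.map Prod.fst).flatten).length * x + binVal ((ps.map Prod.fst).flatten),
            2 ^ ((ps.map Prod.fst).flatten).length * x + binVal ((ps.map Prod.fst).flatten) + 1]
          ![2 ^ ((ps.map Prod.snd).flatten).length * y + binVal ((ps.map Prod.snd).flatten),
            2 ^ ((ps.map Prod.snd).flatten).length * y + binVal ((ps.map Prod.snd).flatten) + 1] := by
  induction ps generalizing x y with
  | nil => funext i; cases i with
    | inl j => fin_cases j <;> simp [binVal, Matrix.mulVec_one] <;> simp [Matrix.mulVec, Matrix.dotProduct]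
    | inr j => fin_cases j <;> simp [binVal, Matrix.mulVec_one] <;> simp [Matrix.mulVec, Matrix.dotProduct]
  | cons p ps ih =>
    simp only [List.map_cons, List.reverse_cons, List.prod_append, List.prod_cons,
      List.prod_nil, mul_one]
    rw [← Matrix.mulVec_mulVec]
    have hp : (Tpair p).mulVec (Sum.elim ![x, x + 1] ![y, y + 1])
        = Sum.elim ![2 ^ p.1.length * x + binVal p.1, 2 ^ p.1.length * x + binVal p.1 + 1]
            ![2 ^ p.2.length * y + binVal p.2, 2 ^ p.2.length * y + binVal p.2 + 1] := by
      rw [Tpair, Matrix.fromBlocks_mulVec]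
      simp only [Sum.elim_comp_inl, Sum.elim_comp_inr, Matrix.zero_mulVec, add_zero, zero_add,
        Tword_mulVec]
    rw [hp, ih]
    have key : ∀ (a b : List Bool) (z : ℚ),
        2 ^ b.length * (2 ^ a.length * z + binVal a) + binVal b
          = 2 ^ (a ++ b).length * z + binVal (a ++ b) := by
      intro a b z
      rw [binVal_append, List.length_append]
      push_cast
      ring
    simp only [List.flatten_cons, key]

theorem Tpair_prod_mulVec (ps : List (List Bool × List Bool)) :
    ((ps.map Tpair).reverse.prod).mulVec v₀
      = Sum.elim
          ![(binVal ((ps.map Prod.fst).flatten) : ℚ), (binVal ((ps.map Prod.fst).flatten) : ℚ) + 1]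
          ![(binVal ((ps.map Prod.snd).flatten) : ℚ), (binVal ((ps.map Prod.snd).flatten) : ℚ) + 1] := by
  have h := Tpair_prod_mulVec_aux ps 0 0
  simp only [mul_zero, zero_add] at h
  simp only [v₀]
  exact h
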